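/- (Proposition 3.2, ξ-sectional curvature.) For every X ∈ V with η(X) = 0 and g(X,X) = ε, where ε = 1 or ε = −1, one has g(R(X, ξ)ξ, X) = −ε(α₀² + β₀² − dβ(ξ)); equivalently the ξ-sectional curvature K(ξ, X) := ε·g(R(X, ξ)ξ, X) of the plane spanned by ξ and X equals −(α₀² + β₀² − dβ(ξ)). -/

import Mathlib

/-!
Along a horizontal vector `X` (`η X = 0`) the structure equations give `φ² X = X` and `φ ξ = 0`,
so the trans-para-Sasakian identity collapses to
`R(X, ξ)ξ = (dβ(ξ) - α₀² - β₀²) X + (dα(ξ) - 2α₀β₀) φX`.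
The `φX`-component is invisible to `g(·, X)`, because compatibility of `g` with `φ` makes
`g(φX, X)` equal to its own negative.
-/

section AlmostParacontact

variable {V : Type*} [AddCommGroup V] [Module ℝ V]
  {g : LinearMap.BilinForm ℝ V} {φ : V →ₗ[ℝ] V} {ξ : V} {η : V →ₗ[ℝ] ℝ}

lemma bilinForm_phi_self_eq_zero_of_eta_eq_zero
    (hg_symm : ∀ X Y : V, g X Y = g Y X) (hφ2 : ∀ X : V, φ (φ X) = X - η X • ξ)
    (hgφ : ∀ X Y : V, g (φ X) (φ Y) = - g X Y + η X * η Y) {X : V} (hX : η X = 0) :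
    g (φ X) X = 0 := by
  have h := hgφ X (φ X)
  rw [hφ2, hX, zero_smul, sub_zero, zero_mul, add_zero, hg_symm X] at h
  linarith

lemma curvature_xi_xi_of_eta_eq_zero (hφξ : φ ξ = 0) (hηξ : η ξ = 1)
    (hφ2 : ∀ X : V, φ (φ X) = X - η X • ξ) {R : V →ₗ[ℝ] V →ₗ[ℝ] V →ₗ[ℝ] V}
    {α₀ β₀ : ℝ} {dα dβ : V →ₗ[ℝ] ℝ}
    (hTPS : ∀ X Y : V, R X Y ξ =
      -((α₀ ^ 2 + β₀ ^ 2) • (η Y • X - η X • Y))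
      - (2 * α₀ * β₀) • (η Y • φ X - η X • φ Y)
      - dα X • φ Y + dα Y • φ X + dβ Y • φ (φ X) - dβ X • φ (φ Y))
    {X : V} (hX : η X = 0) :
    R X ξ ξ = (dβ ξ - (α₀ ^ 2 + β₀ ^ 2)) • X + (dα ξ - 2 * α₀ * β₀) • φ X := by
  rw [hTPS, hφ2, hφξ, map_zero, hηξ, hX]
  module

end AlmostParacontact

theorem stmt_5
    (V : Type*) [AddCommGroup V] [Module ℝ V]
    (g : LinearMap.BilinForm ℝ V)
    (hg_symm : ∀ X Y : V, g X Y = g Y X)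
    (φ : V →ₗ[ℝ] V) (ξ : V) (η : V →ₗ[ℝ] ℝ)
    (hφξ : φ ξ = 0)
    (hηξ : η ξ = 1) (hφ2 : ∀ X : V, φ (φ X) = X - η X • ξ)
    (hgφ : ∀ X Y : V, g (φ X) (φ Y) = - g X Y + η X * η Y)
    (R : V →ₗ[ℝ] V →ₗ[ℝ] V →ₗ[ℝ] V)
    (α₀ β₀ : ℝ) (dα dβ : V →ₗ[ℝ] ℝ)
    (hTPS : ∀ X Y : V, R X Y ξ =
      -((α₀ ^ 2 + β₀ ^ 2) • (η Y • X - η X • Y))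
      - (2 * α₀ * β₀) • (η Y • φ X - η X • φ Y)
      - dα X • φ Y + dα Y • φ X + dβ Y • φ (φ X) - dβ X • φ (φ Y))
    :
    ∀ (X : V) (ε : ℝ), (ε = 1 ∨ ε = -1) → η X = 0 → g X X = ε →
      g (R X ξ ξ) X = -(ε * (α₀ ^ 2 + β₀ ^ 2 - dβ ξ)) ∧
      ε * g (R X ξ ξ) X = -(α₀ ^ 2 + β₀ ^ 2 - dβ ξ) := by
  intro X ε hε hX hXX
  have hφX : g (φ X) X = 0 := bilinForm_phi_self_eq_zero_of_eta_eq_zero hg_symm hφ2 hgφ hX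
  have hsec : g (R X ξ ξ) X = -(ε * (α₀ ^ 2 + β₀ ^ 2 - dβ ξ)) := by
    rw [curvature_xi_xi_of_eta_eq_zero hφξ hηξ hφ2 hTPS hX]
    simp only [map_add, map_smul, LinearMap.add_apply, LinearMap.smul_apply, smul_eq_mul,
      hXX, hφX]
    ring
  have hε2 : ε * ε = 1 := by rcases hε with rfl | rfl <;> norm_num
  refine ⟨hsec, ?_⟩
  rw [hsec]
  linear_combination (-(α₀ ^ 2 + β₀ ^ 2 - dβ ξ)) * hε2
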